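/- Let T be a tree on ℕ having at least one path, and let X be a minimal fixed point of Γ_T: Γ_T(X) = X and no proric proper subset of X is a fixed point of Γ_T. Then every path f of T satisfies f↾n ∉ X for all n (so every path of T passes through T ∖ X), and T has a lexicographically least path: there is a path g of T with g ≤_l h for every path h of T. -/

import Mathlib

/-- A tree on ℕ: a set of finite sequences closed under taking initial segments. -/
def IsTree (T : Set (List ℕ)) : Prop :=
  ∀ σ ∈ T, ∀ τ : List ℕ, τ <+: σ → τ ∈ T

/-- `SX X` = the set of sequences having some element of `X` as an initial segment. -/
def SX (X : Set (List ℕ)) : Set (List ℕ) :=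
  {σ | ∃ τ ∈ X, τ <+: σ}

/-- `σ` is an endnode of `A` if `σ ∈ A` and no one-step extension of `σ` is in `A`. -/
def IsEndnode (A : Set (List ℕ)) (σ : List ℕ) : Prop :=
  σ ∈ A ∧ ∀ n : ℕ, σ ++ [n] ∉ A

/-- The operator `Γ_T`. -/
def Gam (T X : Set (List ℕ)) : Set (List ℕ) :=
  SX X ∪ {σ | ∃ τ : List ℕ, τ <+: σ ∧ IsEndnode (T \ SX X) τ}

/-- `restrict f n = [f 0, …, f (n-1)]`. -/
def restrict (f : ℕ → ℕ) (n : ℕ) : List ℕ :=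
  List.ofFn fun i : Fin n => f i

/-- `f` is a path of the tree `T`. -/
def IsPath (T : Set (List ℕ)) (f : ℕ → ℕ) : Prop :=
  ∀ n, restrict f n ∈ T

/-- `f` is lexicographically smaller than `g`. -/
def LexLt (f g : ℕ → ℕ) : Prop :=
  ∃ n, restrict f n = restrict g n ∧ f n < g n

/-- `f = g` or `f <_l g`. -/
def LexLe (f g : ℕ → ℕ) : Prop := f = g ∨ LexLt f g

lemma restrict_eq (f : ℕ → ℕ) (n : ℕ) : restrict f n = (List.range n).map f := by
  rw [restrict, List.ofFn_eq_map]; apply List.ext_getElem <;> simp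

lemma restrict_zero (f : ℕ → ℕ) : restrict f 0 = [] := rfl

lemma restrict_succ (f : ℕ → ℕ) (n : ℕ) : restrict f (n+1) = restrict f n ++ [f n] := by
  simp [restrict_eq, List.range_succ]

lemma length_restrict (f : ℕ → ℕ) (n : ℕ) : (restrict f n).length = n := by simp [restrict]

lemma prefix_restrict {f : ℕ → ℕ} {n : ℕ} {τ : List ℕ} (h : τ <+: restrict f n) :
    τ = restrict f τ.length := by
  have hlen : τ.length ≤ n := by simpa [length_restrict] using h.length_le
  have h2 := List.prefix_iff_eq_take.mp h
  conv_lhs => rw [h2]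
  rw [restrict_eq, restrict_eq, ← List.map_take, List.take_range, Nat.min_eq_left hlen]

lemma SX_mono {X Y : Set (List ℕ)} (h : X ⊆ Y) : SX X ⊆ SX Y := by
  rintro σ ⟨τ, hτ, hp⟩; exact ⟨τ, h hτ, hp⟩

lemma gam_mono {T : Set (List ℕ)} {X Y : Set (List ℕ)} (h : X ⊆ Y) : Gam T X ⊆ Gam T Y := by
  rintro σ (hσ | ⟨τ, hτσ, hτT, hend⟩)
  · exact Or.inl (SX_mono h hσ)
  · by_cases hτ : τ ∈ SX Y
    · obtain ⟨ρ, hρ, hp⟩ := hτ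
      exact Or.inl ⟨ρ, hρ, hp.trans hτσ⟩
    · refine Or.inr ⟨τ, hτσ, ⟨hτT.1, hτ⟩, fun n hn => ?_⟩
      exact hend n ⟨hn.1, fun hx => hn.2 (SX_mono h hx)⟩

attribute [local instance] Classical.propDecidable

/-- The canonical sequence of nodes in a progressive set containing `[]`. -/
noncomputable def seqA (A : Set (List ℕ)) (h0 : [] ∈ A)
    (hA : ∀ σ ∈ A, ∃ n, σ ++ [n] ∈ A) : ℕ → {σ : List ℕ // σ ∈ A}
  | 0 => ⟨[], h0⟩
  | n+1 => ⟨(seqA A h0 hA n).1 ++ [Nat.find (hA _ (seqA A h0 hA n).2)],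
      Nat.find_spec (hA _ (seqA A h0 hA n).2)⟩

lemma seqA_spec (A : Set (List ℕ)) (h0 : [] ∈ A) (hA : ∀ σ ∈ A, ∃ n, σ ++ [n] ∈ A) :
    ∀ n, restrict (fun m => Nat.find (hA _ (seqA A h0 hA m).2)) n = (seqA A h0 hA n).1 := by
  intro n
  induction n with
  | zero => rfl
  | succ n ih => rw [restrict_succ, ih]; rfl

lemma seqA_path (A : Set (List ℕ)) (h0 : [] ∈ A) (hA : ∀ σ ∈ A, ∃ n, σ ++ [n] ∈ A) :
    ∃ g : ℕ → ℕ, (∀ n, restrict g n ∈ A) ∧ ∀ n m, restrict g n ++ [m] ∈ A → g n ≤ m := by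
  refine ⟨fun m => Nat.find (hA _ (seqA A h0 hA m).2), fun n => ?_, fun n m hm => ?_⟩
  · rw [seqA_spec A h0 hA n]; exact (seqA A h0 hA n).2
  · rw [seqA_spec A h0 hA n] at hm; exact Nat.find_min' _ hm

theorem stmt6 (T : Set (List ℕ)) (hT : IsTree T)
    (hpath : ∃ f : ℕ → ℕ, IsPath T f)
    (X : Set (List ℕ)) (hX : Gam T X = X)
    (hmin : ∀ Y : Set (List ℕ), Y ⊂ X → Gam T Y ≠ Y) :
    (∀ f : ℕ → ℕ, IsPath T f → ∀ n, restrict f n ∉ X) ∧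
    ∃ g : ℕ → ℕ, IsPath T g ∧ ∀ h : ℕ → ℕ, IsPath T h → LexLe g h := by
  -- X is the least prefixed point
  have hleast : ∀ Y : Set (List ℕ), Gam T Y ⊆ Y → X ⊆ Y := by
    intro Y hY
    set L : Set (List ℕ) := ⋂₀ {Z | Gam T Z ⊆ Z} with hL
    have hLsub : ∀ Z, Gam T Z ⊆ Z → L ⊆ Z := fun Z hZ => Set.sInter_subset_of_mem hZ
    have hGL : Gam T L ⊆ L := by
      apply Set.subset_sInter
      intro Z hZ
      exact (gam_mono (hLsub Z hZ)).trans hZ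
    have hLG : L ⊆ Gam T L := hLsub _ (gam_mono hGL)
    have hfix : Gam T L = L := Set.Subset.antisymm hGL hLG
    have hLX : L ⊆ X := hLsub X hX.subset
    have hXL : X = L := by
      by_contra hne
      exact hmin L (hLX.ssubset_of_ne (fun h => hne h.symm)) hfix
    rw [hXL]
    exact hLsub Y hY
  -- the prefixed point of non-prefixes of paths
  set Y : Set (List ℕ) := {σ | ∀ f, IsPath T f → σ ≠ restrict f σ.length} with hYdef
  have hYpre : Gam T Y ⊆ Y := by
    rintro σ (⟨τ, hτY, hτσ⟩ | ⟨τ, hτσ, ⟨hτT, hτS⟩, hend⟩) f hf hσf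
    · exact hτY f hf (prefix_restrict (hσf ▸ hτσ))
    · have hτ : τ = restrict f τ.length := prefix_restrict (hσf ▸ hτσ)
      have hmem : τ ++ [f τ.length] = restrict f (τ.length + 1) := by
        rw [restrict_succ, ← hτ]
      have hT' : τ ++ [f τ.length] ∈ T := hmem ▸ hf (τ.length + 1)
      have := hend (f τ.length)
      have hS : τ ++ [f τ.length] ∈ SX Y := by
        by_contra hS
        exact this ⟨hT', hS⟩
      obtain ⟨ρ, hρY, hρp⟩ := hS
      exact hρY f hf (prefix_restrict (hmem ▸ hρp))
  have part1 : ∀ f : ℕ → ℕ, IsPath T f → ∀ n, restrict f n ∉ X := by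
    intro f hf n hmem
    exact (hleast Y hYpre hmem) f hf (by rw [length_restrict])
  refine ⟨part1, ?_⟩
  -- the set A = T \ SX X is progressive and contains []
  set A : Set (List ℕ) := T \ SX X with hAdef
  have hSXX : SX X ⊆ X := by intro σ h; rw [← hX]; exact Or.inl h
  have hprog : ∀ σ ∈ A, ∃ n, σ ++ [n] ∈ A := by
    intro σ hσ
    by_contra hcon
    push_neg at hcon
    have hend : IsEndnode (T \ SX X) σ := ⟨hσ, fun n h => hcon n h⟩
    have : σ ∈ Gam T X := Or.inr ⟨σ, List.prefix_refl σ, hend⟩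
    rw [hX] at this
    exact hσ.2 ⟨σ, this, List.prefix_refl σ⟩
  have hnil : [] ∈ A := by
    obtain ⟨f, hf⟩ := hpath
    refine ⟨hf 0, ?_⟩
    rintro ⟨τ, hτX, hτp⟩
    rw [List.prefix_nil.mp hτp] at hτX
    exact part1 f hf 0 hτX
  -- define the leftmost path
  obtain ⟨g, hg, hgmin⟩ := seqA_path A hnil hprog
  refine ⟨g, fun n => (hg n).1, ?_⟩
  intro h hh
  by_cases hgh : g = h
  · exact Or.inl hgh
  have hne : ∃ n, g n ≠ h n := Function.ne_iff.mp hgh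
  right
  set n := Nat.find hne with hn
  have hagree : ∀ k < n, g k = h k := fun k hk => by
    by_contra hne'
    exact Nat.find_min hne hk hne'
  have hrestr : restrict g n = restrict h n := by
    rw [restrict_eq, restrict_eq]
    exact List.map_congr_left (fun k hk => hagree k (List.mem_range.mp hk))
  refine ⟨n, hrestr, ?_⟩
  have hhA : restrict h (n + 1) ∈ A :=
    ⟨hh (n + 1), fun hS => part1 h hh (n + 1) (hSXX hS)⟩
  rw [restrict_succ, ← hrestr] at hhA
  exact lt_of_le_of_ne (hgmin n (h n) hhA) (Nat.find_spec hne)
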